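/- arXiv:2306.11500 — 6 statements merged into one kernel-verified Lean document; each statement's English description precedes it below -/
import Mathlib

section
/- For any permutation σ of [n], the number of cycles of σ is congruent modulo 2 to fix(σ) + cpeak(σ) + ucross(σ) + lcross(σ), where fix is the number of fixed points, cpeak the number of cycle peaks, and ucross, lcross the numbers of upper and lower crossings. -/
open Finset

def fixCt {n : ℕ} (σ : Equiv.Perm (Fin n)) : ℕ :=
  (univ.filter fun i => σ i = i).card

def cpeakCt {n : ℕ} (σ : Equiv.Perm (Fin n)) : ℕ :=
  (univ.filter fun i => σ⁻¹ i < i ∧ σ i < i).card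

def cvalCt {n : ℕ} (σ : Equiv.Perm (Fin n)) : ℕ :=
  (univ.filter fun i => i < σ⁻¹ i ∧ i < σ i).card

def cdriseCt {n : ℕ} (σ : Equiv.Perm (Fin n)) : ℕ :=
  (univ.filter fun i => σ⁻¹ i < i ∧ i < σ i).card

def cdfallCt {n : ℕ} (σ : Equiv.Perm (Fin n)) : ℕ :=
  (univ.filter fun i => i < σ⁻¹ i ∧ σ i < i).card

def ucrossCt {n : ℕ} (σ : Equiv.Perm (Fin n)) : ℕ :=
  (univ.filter fun p : Fin n × Fin n × Fin n × Fin n =>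
    p.1 < p.2.1 ∧ p.2.1 < p.2.2.1 ∧ p.2.2.1 < p.2.2.2 ∧
    p.2.2.1 = σ p.1 ∧ p.2.2.2 = σ p.2.1).card

def lcrossCt {n : ℕ} (σ : Equiv.Perm (Fin n)) : ℕ :=
  (univ.filter fun p : Fin n × Fin n × Fin n × Fin n =>
    p.1 < p.2.1 ∧ p.2.1 < p.2.2.1 ∧ p.2.2.1 < p.2.2.2 ∧
    p.1 = σ p.2.2.1 ∧ p.2.1 = σ p.2.2.2).card

def unestCt {n : ℕ} (σ : Equiv.Perm (Fin n)) : ℕ :=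
  (univ.filter fun p : Fin n × Fin n × Fin n × Fin n =>
    p.1 < p.2.1 ∧ p.2.1 < p.2.2.1 ∧ p.2.2.1 < p.2.2.2 ∧
    p.2.2.2 = σ p.1 ∧ p.2.2.1 = σ p.2.1).card

def lnestCt {n : ℕ} (σ : Equiv.Perm (Fin n)) : ℕ :=
  (univ.filter fun p : Fin n × Fin n × Fin n × Fin n =>
    p.1 < p.2.1 ∧ p.2.1 < p.2.2.1 ∧ p.2.2.1 < p.2.2.2 ∧
    p.1 = σ p.2.2.2 ∧ p.2.1 = σ p.2.2.1).card

def psnestCt {n : ℕ} (σ : Equiv.Perm (Fin n)) : ℕ :=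
  (univ.filter fun p : Fin n × Fin n × Fin n =>
    p.1 < p.2.1 ∧ p.2.1 < p.2.2 ∧ σ p.2.1 = p.2.1 ∧ σ p.1 = p.2.2).card

def invCt {n : ℕ} (σ : Equiv.Perm (Fin n)) : ℕ :=
  (univ.filter fun p : Fin n × Fin n => p.1 < p.2 ∧ σ p.2 < σ p.1).card

/-- Number of cycles of a permutation, counting fixed points as cycles. -/
def cycCt {n : ℕ} (σ : Equiv.Perm (Fin n)) : ℕ :=
  σ.cycleType.card + fixCt σ

def ucrossAt {n : ℕ} (σ : Equiv.Perm (Fin n)) (j : Fin n) : ℕ :=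
  (univ.filter fun p : Fin n × Fin n × Fin n =>
    p.1 < j ∧ j < p.2.1 ∧ p.2.1 < p.2.2 ∧ p.2.1 = σ p.1 ∧ p.2.2 = σ j).card

def unestAt {n : ℕ} (σ : Equiv.Perm (Fin n)) (j : Fin n) : ℕ :=
  (univ.filter fun p : Fin n × Fin n × Fin n =>
    p.1 < j ∧ j < p.2.1 ∧ p.2.1 < p.2.2 ∧ p.2.1 = σ j ∧ p.2.2 = σ p.1).card

def lcrossAt {n : ℕ} (σ : Equiv.Perm (Fin n)) (k : Fin n) : ℕ :=
  (univ.filter fun p : Fin n × Fin n × Fin n =>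
    p.1 < p.2.1 ∧ p.2.1 < k ∧ k < p.2.2 ∧ p.1 = σ k ∧ p.2.1 = σ p.2.2).card

def lnestAt {n : ℕ} (σ : Equiv.Perm (Fin n)) (k : Fin n) : ℕ :=
  (univ.filter fun p : Fin n × Fin n × Fin n =>
    p.1 < p.2.1 ∧ p.2.1 < k ∧ k < p.2.2 ∧ p.1 = σ p.2.2 ∧ p.2.1 = σ k).card

/-- `i` is a record (left-to-right maximum) of `σ`. -/
def IsRecord {n : ℕ} (σ : Equiv.Perm (Fin n)) (i : Fin n) : Prop :=
  ∀ j, j < i → σ j < σ i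

/-- `i` is an antirecord (right-to-left minimum) of `σ`. -/
def IsAntirecord {n : ℕ} (σ : Equiv.Perm (Fin n)) (i : Fin n) : Prop :=
  ∀ j, i < j → σ i < σ j

def ujoinCt {n : ℕ} (σ : Equiv.Perm (Fin n)) : ℕ :=
  (univ.filter fun p : Fin n × Fin n × Fin n =>
    p.1 < p.2.1 ∧ p.2.1 < p.2.2 ∧ p.2.1 = σ p.1 ∧ p.2.2 = σ p.2.1).card

def ljoinCt {n : ℕ} (σ : Equiv.Perm (Fin n)) : ℕ :=
  (univ.filter fun p : Fin n × Fin n × Fin n =>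
    p.1 < p.2.1 ∧ p.2.1 < p.2.2 ∧ p.1 = σ p.2.1 ∧ p.2.1 = σ p.2.2).card

/-!
Since `sign σ = (-1) ^ (#σ.support + σ.cycleType.card)`, it suffices to show
`sign σ = (-1) ^ (#σ.support + cpeak σ + ucross σ + lcross σ)`. Induct on the support: let `m` be
the largest point moved by `σ` and cut it out of its cycle, `τ = σ * swap (σ⁻¹ m) m`, so that
`sign τ = -sign σ`. As nothing above `m` moves, the arcs `σ⁻¹ m → m → σ m` are simply replaced by
the arc `σ⁻¹ m → σ m`; modulo 2 the upper (lower) crossings then change by the number of arcs of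
`τ` (of `τ⁻¹`) passing over `max (σ⁻¹ m) (σ m)`, and these two numbers differ by the right amount
because as many arcs cross that point to the right as to the left. All statistics are invariant
under `σ ↦ σ⁻¹` (which exchanges upper and lower crossings), so one may assume `σ⁻¹ m ≤ σ m`.
-/

section Counting

variable {β : Type*} [Fintype β]

theorem card_filter_add_card_filter_eq_of_forall_notMem (s : Finset β) {P Q : β → Prop}
    [DecidablePred P] [DecidablePred Q] (h : ∀ x ∉ s, P x ↔ Q x) :
    #{x | P x} + #{x ∈ s | Q x} = #{x | Q x} + #{x ∈ s | P x} := by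
  classical
  simp only [card_filter]
  rw [← sum_add_sum_compl s, ← sum_add_sum_compl s (fun x => if Q x then 1 else 0),
    sum_congr rfl fun x hx => if_congr (h x (mem_compl.1 hx)) rfl rfl]
  ring

theorem card_filter_le_and [LinearOrder β] (x : β) (P : β → Prop) [DecidablePred P] :
    #{i | i ≤ x ∧ P i} = #{i | i < x ∧ P i} + if P x then 1 else 0 := by
  have := card_filter_add_card_filter_eq_of_forall_notMem {x}
    (P := fun i => i ≤ x ∧ P i) (Q := fun i => i < x ∧ P i)
    fun i hi => by rw [mem_singleton] at hi; simp [le_iff_lt_or_eq, hi]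
  by_cases hx : P x <;> simp_all [filter_singleton]

theorem card_filter_prod_eq_add [DecidableEq β] (Q : β → β → Prop) [DecidableRel Q] (a : β)
    (ha : ¬ Q a a) :
    #{p : β × β | Q p.1 p.2} =
      #{p : β × β | p.1 ≠ a ∧ p.2 ≠ a ∧ Q p.1 p.2} + #{j | Q a j} + #{i | Q i a} := by
  have split : ∀ p : β × β, (if Q p.1 p.2 then 1 else 0) =
      (if p.1 ≠ a ∧ p.2 ≠ a ∧ Q p.1 p.2 then 1 else 0) + (if p.1 = a ∧ Q a p.2 then 1 else 0)
        + (if p.2 = a ∧ Q p.1 a then 1 else 0) := by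
    rintro ⟨i, j⟩
    by_cases hi : i = a <;> by_cases hj : j = a <;> simp_all
  simp only [card_filter, sum_congr rfl fun p _ => split p, sum_add_distrib]
  simp [Fintype.sum_prod_type, ite_and]

end Counting

namespace Equiv.Perm

section Skip

variable {α : Type*} [DecidableEq α]

/-- `σ.skip m` cuts `m` out of its cycle: it sends `σ⁻¹ m` to `σ m` and fixes `m`. -/
def skip (σ : Perm α) (m : α) : Perm α := σ * swap (σ⁻¹ m) m

variable {σ : Perm α} {m a x : α}

@[simp] lemma skip_apply_self : σ.skip m m = m := by simp [skip]

lemma skip_apply_of_apply_eq (ha : σ a = m) : σ.skip m a = σ m := by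
  subst ha; simp [skip]

lemma skip_apply_of_ne (ha : σ a = m) (h₁ : x ≠ a) (h₂ : x ≠ m) : σ.skip m x = σ x := by
  subst ha; simp [skip, swap_apply_of_ne_of_ne h₁ h₂]

lemma skip_inv : (σ.skip m)⁻¹ = σ⁻¹.skip m := by
  rw [skip, skip, mul_inv_rev, swap_inv, mul_swap_eq_swap_mul, inv_inv, swap_comm]
  simp

lemma skip_inv_apply_apply_self (ha : σ a = m) : (σ.skip m)⁻¹ (σ m) = a := by
  rw [skip_inv, skip_apply_of_apply_eq (σ := σ⁻¹) (by simp), ← ha]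
  simp

lemma skip_inv_apply_of_ne (h₁ : x ≠ σ m) (h₂ : x ≠ m) : (σ.skip m)⁻¹ x = σ⁻¹ x := by
  rw [skip_inv, skip_apply_of_ne (σ := σ⁻¹) (a := σ m) (by simp) h₁ h₂]

variable [Fintype α]

lemma sign_skip (hm : σ m ≠ m) : sign (σ.skip m) = -sign σ := by
  have : σ⁻¹ m ≠ m := fun h => hm (by simpa using congrArg σ h.symm)
  rw [skip, sign_mul, sign_swap this, mul_neg_one]

theorem card_support_skip (hm : σ m ≠ m) (ha : σ a = m) :
    #(σ.skip m).support + 1 + (if a = σ m then 1 else 0) = #σ.support := by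
  have ham : a ≠ m := by rintro rfl; exact hm ha
  have key := card_filter_add_card_filter_eq_of_forall_notMem {a, m}
    (P := fun x => σ.skip m x ≠ x) (Q := fun x => σ x ≠ x) fun x hx => by
      simp only [mem_insert, mem_singleton, not_or] at hx
      rw [skip_apply_of_ne ha hx.1 hx.2]
  have hσ : #{x ∈ {a, m} | σ x ≠ x} = 2 := by
    rw [filter_true_of_mem, card_pair ham]
    simp [hm, ha, Ne.symm ham]
  have hskip : #{x ∈ {a, m} | σ.skip m x ≠ x} = if a = σ m then 0 else 1 := by
    rw [filter_insert, filter_singleton, skip_apply_of_apply_eq ha]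
    by_cases hab : a = σ m <;> simp [hab, eq_comm]
  rw [hσ, hskip] at key
  change #{x | σ.skip m x ≠ x} + 1 + _ = #{x | σ x ≠ x}
  split_ifs at key ⊢ <;> omega

end Skip

section Order

variable {α : Type*} [Fintype α] [LinearOrder α]

def arcsAbove (σ : Perm α) (x : α) : ℕ := #{i | i < x ∧ x < σ i}

/-- As many arcs leave `{i | i ≤ x}` as enter it. -/
theorem arcsAbove_add_ite_eq (σ : Perm α) (x : α) :
    σ.arcsAbove x + (if x < σ x then 1 else 0) = σ⁻¹.arcsAbove x + if x < σ⁻¹ x then 1 else 0 := by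
  have h : ∀ ρ : Perm α, #{i | i ≤ x ∧ x < ρ i} + #{i | i ≤ x ∧ ρ i ≤ x} = #{i | i ≤ x} := by
    intro ρ
    simpa [filter_filter, not_lt] using
      card_filter_add_card_filter_not (s := {i | i ≤ x}) fun i => x < ρ i
  have hσ : #{i | i ≤ x ∧ σ i ≤ x} = #{i | i ≤ x ∧ σ⁻¹ i ≤ x} := by
    simp only [card_filter]
    rw [← Equiv.sum_comp σ fun j => if j ≤ x ∧ σ⁻¹ j ≤ x then 1 else 0]
    simp [and_comm]
  have h₁ := h σ
  have h₂ := h σ⁻¹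
  rw [arcsAbove, arcsAbove, ← card_filter_le_and, ← card_filter_le_and]
  omega

variable {σ : Perm α} {m a : α}

lemma apply_eq_or_le_of_isGreatest_support (hm : IsGreatest (σ.support : Set α) m) (x : α) :
    σ x = x ∨ σ x ≤ m :=
  (eq_or_ne (σ x) x).imp_right fun hx => hm.2 (apply_mem_support.2 (mem_support.2 hx))

lemma lt_of_isGreatest_support (hm : IsGreatest (σ.support : Set α) m) (ha : σ a = m) :
    a < m ∧ σ m < m := by
  have hσm : σ m ≠ m := mem_support.1 hm.1
  have ham : a ≠ m := by rintro rfl; exact hσm ha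
  have hσa : σ a ≠ a := by rw [ha]; exact Ne.symm ham
  exact ⟨(hm.2 (mem_support.2 hσa)).lt_of_ne ham,
    ((apply_eq_or_le_of_isGreatest_support hm m).resolve_left hσm).lt_of_ne hσm⟩

end Order

end Equiv.Perm

open Equiv Perm

section Statistics

variable {n : ℕ}

lemma lcrossCt_eq_ucrossCt_inv (σ : Perm (Fin n)) : lcrossCt σ = ucrossCt σ⁻¹ := by
  simp only [lcrossCt, ucrossCt, eq_inv_iff_eq, @eq_comm _ (σ _)]

lemma cpeakCt_inv (σ : Perm (Fin n)) : cpeakCt σ⁻¹ = cpeakCt σ := by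
  simp only [cpeakCt, inv_inv, and_comm]

lemma ucrossCt_eq_card (σ : Perm (Fin n)) :
    ucrossCt σ = #{p : Fin n × Fin n | p.1 < p.2 ∧ p.2 < σ p.1 ∧ σ p.1 < σ p.2} := by
  refine card_nbij' (fun p => (p.1, p.2.1)) (fun p => (p.1, p.2, σ p.1, σ p.2)) ?_ ?_ ?_ ?_
  · rintro ⟨i, j, k, l⟩
    simp only [coe_filter, Set.mem_ofPred_eq, mem_univ, true_and]
    rintro ⟨hij, hjk, hkl, rfl, rfl⟩
    exact ⟨hij, hjk, hkl⟩
  · rintro ⟨i, j⟩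
    simp +contextual
  · rintro ⟨i, j, k, l⟩
    simp +contextual
  · intro p _
    rfl

variable {σ : Perm (Fin n)} {m a : Fin n}

theorem cpeakCt_skip (hm : IsGreatest (σ.support : Set (Fin n)) m) (ha : σ a = m)
    (hab : a ≤ σ m) :
    cpeakCt (σ.skip m) + 1 = cpeakCt σ + if a < σ m ∧ σ (σ m) < σ m then 1 else 0 := by
  obtain ⟨ham, hbm⟩ := lt_of_isGreatest_support hm ha
  have key := card_filter_add_card_filter_eq_of_forall_notMem {σ m, m}
    (P := fun x => (σ.skip m)⁻¹ x < x ∧ σ.skip m x < x)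
    (Q := fun x => σ⁻¹ x < x ∧ σ x < x) fun x hx => by
      simp only [mem_insert, mem_singleton, not_or] at hx
      rw [skip_inv_apply_of_ne hx.1 hx.2]
      rcases eq_or_ne x a with rfl | hxa
      · rw [skip_apply_of_apply_eq ha, ha]
        have := Ne.lt_of_le hx.1 hab
        omega
      · rw [skip_apply_of_ne ha hxa hx.2]
  have ha' : σ.symm m = a := by rw [← ha, symm_apply_apply]
  have hσ : #{x ∈ {σ m, m} | σ⁻¹ x < x ∧ σ x < x} = 1 := by
    simp [filter_insert, filter_singleton, ha', ham, hbm, lt_asymm hbm]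
  have hskip : #{x ∈ {σ m, m} | (σ.skip m)⁻¹ x < x ∧ σ.skip m x < x} =
      if a < σ m ∧ σ (σ m) < σ m then 1 else 0 := by
    rw [filter_insert, filter_singleton, skip_inv_apply_apply_self ha]
    rcases hab.eq_or_lt with hab | hab
    · simp [← hab, skip_apply_of_apply_eq ha]
    · rw [skip_apply_of_ne ha hab.ne' hbm.ne]
      simp only [skip_apply_self, lt_self_iff_false, and_false, if_false]
      split_ifs <;> rfl
  rw [hσ, hskip] at key
  rw [cpeakCt, cpeakCt]
  omega

theorem upperCrossing_skip_iff (hm : IsGreatest (σ.support : Set (Fin n)) m) (ha : σ a = m)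
    {i j : Fin n} (hia : i ≠ a) (hja : j ≠ a) :
    (i < j ∧ j < σ.skip m i ∧ σ.skip m i < σ.skip m j) ↔ (i < j ∧ j < σ i ∧ σ i < σ j) := by
  have hbm := (lt_of_isGreatest_support hm ha).2
  obtain rfl | him := eq_or_ne i m
  · rw [skip_apply_self]
    omega
  obtain rfl | hjm := eq_or_ne j m
  · rw [skip_apply_self, skip_apply_of_ne ha hia him]
    have := apply_eq_or_le_of_isGreatest_support hm i
    omega
  rw [skip_apply_of_ne ha hia him, skip_apply_of_ne ha hja hjm]

theorem even_upperCrossings_through_add_arcsAbove (hm : IsGreatest (σ.support : Set (Fin n)) m)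
    (ha : σ a = m) :
    Even (#{j | a < j ∧ j < σ a ∧ σ a < σ j} + #{i | i < a ∧ a < σ i ∧ σ i < σ a}
      + #{j | a < j ∧ j < σ.skip m a ∧ σ.skip m a < σ.skip m j}
      + #{i | i < a ∧ a < σ.skip m i ∧ σ.skip m i < σ.skip m a}
      + (σ.skip m).arcsAbove (max a (σ m))) := by
  obtain ⟨ham, hbm⟩ := lt_of_isGreatest_support hm ha
  have := max_choice a (σ m)
  have := le_max_left a (σ m)
  have := le_max_right a (σ m)
  rw [arcsAbove]
  simp only [card_filter, ← sum_add_distrib]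
  refine even_sum _ fun i _ => ?_
  rw [ha, skip_apply_of_apply_eq ha]
  obtain rfl | hia := eq_or_ne i a
  · rw [skip_apply_of_apply_eq ha]
    split_ifs <;> first | decide | omega
  obtain rfl | him := eq_or_ne i m
  · rw [skip_apply_self]
    split_ifs <;> first | decide | omega
  rw [skip_apply_of_ne ha hia him]
  have hσi : σ i ≠ m := fun h => hia (σ.injective (h.trans ha.symm))
  have hib : σ i ≠ σ m := fun h => him (σ.injective h)
  have := apply_eq_or_le_of_isGreatest_support hm i
  split_ifs <;> first | decide | omega

theorem even_ucrossCt_add_ucrossCt_skip (hm : IsGreatest (σ.support : Set (Fin n)) m)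
    (ha : σ a = m) :
    Even (ucrossCt σ + ucrossCt (σ.skip m) + (σ.skip m).arcsAbove (max a (σ m))) := by
  have split := fun ρ : Perm (Fin n) => (ucrossCt_eq_card ρ).trans
    (card_filter_prod_eq_add (fun i j => i < j ∧ j < ρ i ∧ ρ i < ρ j) a (by simp))
  have hrest : #{p : Fin n × Fin n | p.1 ≠ a ∧ p.2 ≠ a ∧
        (p.1 < p.2 ∧ p.2 < σ.skip m p.1 ∧ σ.skip m p.1 < σ.skip m p.2)} =
      #{p : Fin n × Fin n | p.1 ≠ a ∧ p.2 ≠ a ∧ (p.1 < p.2 ∧ p.2 < σ p.1 ∧ σ p.1 < σ p.2)} :=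
    congrArg card <| filter_congr fun p _ => and_congr_right fun hia =>
      and_congr_right fun hja => upperCrossing_skip_iff hm ha hia hja
  have hthrough := even_upperCrossings_through_add_arcsAbove hm ha
  rw [split σ, split (σ.skip m), hrest]
  rw [Nat.even_iff] at hthrough ⊢
  omega

end Statistics

section Sign

variable {n : ℕ}

def crossSign (σ : Perm (Fin n)) : ℤˣ :=
  Int.negOnePow (#σ.support + cpeakCt σ + ucrossCt σ + lcrossCt σ : ℕ)

lemma crossSign_one : crossSign (1 : Perm (Fin n)) = 1 := by
  have hpeak : cpeakCt (1 : Perm (Fin n)) = 0 := by simp [cpeakCt]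
  have hcross : ucrossCt (1 : Perm (Fin n)) = 0 := by
    rw [ucrossCt_eq_card, card_eq_zero, filter_eq_empty_iff]
    intro p _ h
    simp only [one_apply] at h
    omega
  rw [crossSign, lcrossCt_eq_ucrossCt_inv, inv_one, hpeak, hcross, support_one, card_empty]
  rfl

lemma crossSign_inv (σ : Perm (Fin n)) : crossSign σ⁻¹ = crossSign σ := by
  rw [crossSign, crossSign, support_inv, cpeakCt_inv, lcrossCt_eq_ucrossCt_inv,
    lcrossCt_eq_ucrossCt_inv, inv_inv, add_assoc, add_comm (ucrossCt σ⁻¹), ← add_assoc]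

variable {σ : Perm (Fin n)} {m a : Fin n}

lemma crossSign_skip_of_le (hm : IsGreatest (σ.support : Set (Fin n)) m) (ha : σ a = m)
    (hab : a ≤ σ m) : crossSign (σ.skip m) = -crossSign σ := by
  have hσm : σ m ≠ m := mem_support.1 hm.1
  have hsupp := card_support_skip hσm ha
  have hpeak := cpeakCt_skip hm ha hab
  have hucross := even_ucrossCt_add_ucrossCt_skip hm ha
  have hlcross := even_ucrossCt_add_ucrossCt_skip (σ := σ⁻¹) (a := σ m)
    (by rwa [support_inv]) (by simp)
  have ha' : σ⁻¹ m = a := by rw [← ha]; simp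
  rw [← skip_inv, ← lcrossCt_eq_ucrossCt_inv, ← lcrossCt_eq_ucrossCt_inv, ha',
    max_eq_left hab] at hlcross
  have hbal := arcsAbove_add_ite_eq (σ.skip m) (σ m)
  rw [skip_inv_apply_apply_self ha] at hbal
  rw [max_eq_right hab] at hucross
  rw [crossSign, crossSign, ← Int.negOnePow_succ, Int.negOnePow_eq_iff, Int.even_iff]
  rw [Nat.even_iff] at hucross hlcross
  rcases hab.eq_or_lt with rfl | hlt
  · rw [skip_apply_of_apply_eq ha] at hbal
    simp only [lt_irrefl, if_false, if_true, false_and] at hbal hsupp hpeak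
    push_cast
    omega
  · have hb : σ (σ m) ≠ σ m := fun h => hσm (σ.injective h)
    rw [skip_apply_of_ne ha hlt.ne' hσm] at hbal
    simp only [hlt, hlt.ne, not_lt.2 hlt.le, if_false, true_and] at hbal hsupp hpeak
    split_ifs at hbal hpeak <;> push_cast <;> omega

lemma crossSign_skip (hm : IsGreatest (σ.support : Set (Fin n)) m) :
    crossSign (σ.skip m) = -crossSign σ := by
  have ha : σ (σ⁻¹ m) = m := by simp
  rcases le_total (σ⁻¹ m) (σ m) with hab | hab
  · exact crossSign_skip_of_le hm ha hab
  · have := crossSign_skip_of_le (σ := σ⁻¹) (a := σ m) (by rwa [support_inv]) (by simp) hab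
    rwa [← skip_inv, crossSign_inv, crossSign_inv] at this

theorem sign_eq_crossSign (σ : Perm (Fin n)) : sign σ = crossSign σ := by
  obtain rfl | hσ := eq_or_ne σ 1
  · rw [Perm.sign_one, crossSign_one]
  have hm := isGreatest_max' σ.support (nonempty_iff_ne_empty.2 (support_eq_empty_iff.not.2 hσ))
  set m := σ.support.max' _
  have hσm : σ m ≠ m := mem_support.1 hm.1
  have hlt : #(σ.skip m).support < #σ.support := by
    have := card_support_skip (a := σ⁻¹ m) hσm (by simp)
    omega
  have ih := sign_eq_crossSign (σ.skip m)
  rwa [sign_skip hσm, crossSign_skip hm, neg_inj] at ih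
termination_by #σ.support
decreasing_by exact hlt

theorem card_cycleType_mod_two (σ : Perm (Fin n)) :
    σ.cycleType.card % 2 = (cpeakCt σ + ucrossCt σ + lcrossCt σ) % 2 := by
  have h := (sign_of_cycleType σ).symm.trans (sign_eq_crossSign σ)
  rw [sum_cycleType, ← zpow_natCast, ← Int.negOnePow_def, crossSign, Int.negOnePow_eq_iff,
    Int.even_iff] at h
  push_cast at h
  omega

end Sign

theorem cyc_mod_two_eq_fix_add_cpeak_add_cross {n : ℕ} (σ : Equiv.Perm (Fin n)) :
    cycCt σ % 2 = (fixCt σ + cpeakCt σ + ucrossCt σ + lcrossCt σ) % 2 := by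
  have := card_cycleType_mod_two σ
  rw [cycCt]
  omega
end

section
/- For any permutation σ of [n], the number of cycles of σ is congruent modulo 2 to fix(σ) + cval(σ) + ucross(σ) + lcross(σ), where cval is the number of cycle valleys. -/
open Finset

/-!
Since `sign σ = (-1) ^ (n - cyc σ)` and also `sign σ = (-1) ^ inv σ`, it suffices to show
`inv + #{i | σ i ≠ i} + ucross + lcross ≡ cval (mod 2)`. Draw every `i ↦ σ i` as an arc, upper if
`i < σ i` and lower if `σ i < i`. For a pair `a < b`, a four-point identity mod 2 rewrites the
inversion indicator of `(a, b)`, plus the indicators that `b` lies under the arc of `a` and `a`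
under the arc of `b`, plus the two crossing indicators, as the number of endpoints of a lower arc
at `b` lying under an upper arc at `a`, plus a term that is `1` exactly when `σ b = a` and `a` is a
cycle valley. Summed over all pairs, the points under arcs number
`∑ (|σ i - i| - 1) ≡ #{i | σ i ≠ i}`, and the endpoint count vanishes: every point is an endpoint
of as many lower as upper arcs mod 2, which turns it into the same count for pairs of upper arcs,
a relation that is symmetric in the two arcs.
-/

open Equiv

local notation "χ[" P "]" => ite P (1 : ZMod 2) 0

section Pointwise

variable {α : Type*} [LinearOrder α]

/-- The summand of `Equiv.Perm.inv_add_ne_add_crossings_eq_valley`, with `u = σ a`, `v = σ b`. -/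
theorem indicator_inv_add_cross_eq {a b u v : α} (h : u = v → a = b) :
    χ[a < b ∧ v < u] + (χ[a < b ∧ b < u] + χ[a < b ∧ v < a]) + χ[a < b ∧ b < u ∧ u < v] +
        χ[a < b ∧ u < v ∧ v < a] =
      χ[a < u] * χ[v < b] * (χ[a < b ∧ b < u] + χ[a < v ∧ v < u]) +
        χ[v = a ∧ a < b ∧ a < u] := by
  split_ifs <;> first | decide | (exfalso; grind)

theorem indicator_between_add_eq {a b u : α} :
    χ[a < b ∧ b < u] + χ[b < a ∧ u < b] =
      χ[a < b] + χ[u < b] + χ[b = a ∧ u < a] + χ[b = u ∧ a < u] := by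
  split_ifs <;> first | decide | (exfalso; grind)

theorem indicator_lt_add_lt_comm {r u w : α} (h : u = r ↔ w = r) :
    χ[u < r] + χ[r < w] = χ[r < u] + χ[w < r] := by
  split_ifs <;> first | decide | (exfalso; grind)

theorem indicator_crossing_symm {p q u v : α} (h : u = v ↔ p = q) :
    χ[p < u] * χ[q < v] * (χ[p < q ∧ q < u] + χ[p < v ∧ v < u]) =
      χ[q < v] * χ[p < u] * (χ[q < p ∧ p < v] + χ[q < u ∧ u < v]) := by
  split_ifs <;> first | decide | (exfalso; grind)

end Pointwise

theorem ZMod.sum_sum_eq_zero_of_symm {ι : Type*} [Fintype ι] (f : ι → ι → ZMod 2)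
    (hf : ∀ i j, f i j = f j i) (hdiag : ∀ i, f i i = 0) : ∑ i, ∑ j, f i j = 0 := by
  rw [← Fintype.sum_prod_type']
  refine sum_ninvolution Prod.swap (fun p => ?_) (fun p hp => ?_) (fun _ => mem_univ _)
    Prod.swap_swap
  · rw [Prod.fst_swap, Prod.snd_swap, hf, CharTwo.add_self_eq_zero]
  · obtain ⟨i, j⟩ := p
    intro h
    simp only [Prod.swap_prod_mk, Prod.mk.injEq] at h
    exact hp (h.1 ▸ hdiag i)

namespace Equiv.Perm

variable {α : Type*} [Fintype α] [LinearOrder α] (σ : Perm α)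

theorem sum_sum_between_eq_sum_ne :
    ∑ a, ∑ b, (χ[a < b ∧ b < σ a] + χ[a < b ∧ σ b < a]) = ∑ a, χ[σ a ≠ a] := by
  have hcancel : ∑ a, ∑ b, χ[σ a < b] = ∑ a, ∑ b, χ[a < b] :=
    Equiv.sum_comp σ fun a => ∑ b, χ[a < b]
  calc ∑ a, ∑ b, (χ[a < b ∧ b < σ a] + χ[a < b ∧ σ b < a])
      = ∑ a, ∑ b, (χ[a < b ∧ b < σ a] + χ[b < a ∧ σ a < b]) := by
        simp only [sum_add_distrib]
        rw [sum_comm (f := fun a b => χ[a < b ∧ σ b < a])]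
    _ = ∑ a, ∑ b, (χ[a < b] + χ[σ a < b] + χ[b = a ∧ σ a < a] + χ[b = σ a ∧ a < σ a]) := by
        simp only [indicator_between_add_eq]
    _ = ∑ a, (χ[σ a < a] + χ[a < σ a]) := by
        simp only [sum_add_distrib, hcancel, CharTwo.add_self_eq_zero, zero_add]
        simp [ite_and]
    _ = ∑ a, χ[σ a ≠ a] := by
        refine sum_congr rfl fun a _ => ?_
        split_ifs <;> first | decide | (exfalso; grind)

theorem sum_lower_mul_eq_sum_upper_mul (g : α → ZMod 2) :
    ∑ b, χ[σ b < b] * (g b + g (σ b)) = ∑ b, χ[b < σ b] * (g b + g (σ b)) := by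
  have reindex (P : α → α → Prop) [DecidableRel P] :
      ∑ b, χ[P (σ b) b] * g (σ b) = ∑ r, χ[P r (σ⁻¹ r)] * g r := by
    rw [← Equiv.sum_comp σ⁻¹]
    simp only [Perm.coe_inv, apply_symm_apply]
  have endpoints (r : α) : χ[σ r < r] + χ[r < σ⁻¹ r] = χ[r < σ r] + χ[σ⁻¹ r < r] :=
    indicator_lt_add_lt_comm (by rw [Perm.inv_eq_iff_eq, eq_comm])
  simp only [mul_add, sum_add_distrib, reindex (fun x y => x < y), reindex (fun x y => y < x)]
  simp only [← sum_add_distrib, ← add_mul, endpoints]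

theorem sum_sum_upper_lower_crossing_eq_zero :
    ∑ a, ∑ b, χ[a < σ a] * χ[σ b < b] * (χ[a < b ∧ b < σ a] + χ[a < σ b ∧ σ b < σ a]) = 0 :=
  calc _ = ∑ a, χ[a < σ a] * ∑ b, χ[σ b < b] * (χ[a < b ∧ b < σ a] + χ[a < σ b ∧ σ b < σ a]) := by
          simp only [mul_sum, mul_assoc]
    _ = ∑ a, χ[a < σ a] * ∑ b, χ[b < σ b] * (χ[a < b ∧ b < σ a] + χ[a < σ b ∧ σ b < σ a]) :=
          sum_congr rfl fun a _ =>
            congrArg _ (sum_lower_mul_eq_sum_upper_mul σ fun r => χ[a < r ∧ r < σ a])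
    _ = ∑ a, ∑ b, χ[a < σ a] * χ[b < σ b] * (χ[a < b ∧ b < σ a] + χ[a < σ b ∧ σ b < σ a]) := by
          simp only [mul_sum, mul_assoc]
    _ = 0 := ZMod.sum_sum_eq_zero_of_symm _
          (fun _ _ => indicator_crossing_symm σ.injective.eq_iff) (fun _ => by simp)

theorem sum_sum_eq_sum_valley :
    ∑ a, ∑ b, χ[σ b = a ∧ a < b ∧ a < σ a] = ∑ a, χ[a < σ⁻¹ a ∧ a < σ a] := by
  simp [← Perm.eq_inv_iff_eq, ite_and]

theorem inv_add_ne_add_crossings_eq_valley :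
    ∑ a, ∑ b, χ[a < b ∧ σ b < σ a] + ∑ a, χ[σ a ≠ a] +
        ∑ a, ∑ b, χ[a < b ∧ b < σ a ∧ σ a < σ b] + ∑ a, ∑ b, χ[a < b ∧ σ a < σ b ∧ σ b < a] =
      ∑ a, χ[a < σ⁻¹ a ∧ a < σ a] := by
  rw [← sum_sum_between_eq_sum_ne, ← sum_sum_eq_sum_valley]
  calc _ = ∑ a, ∑ b, (χ[a < σ a] * χ[σ b < b] * (χ[a < b ∧ b < σ a] + χ[a < σ b ∧ σ b < σ a]) +
          χ[σ b = a ∧ a < b ∧ a < σ a]) := by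
        simp only [← sum_add_distrib]
        exact sum_congr rfl fun a _ => sum_congr rfl fun b _ =>
          indicator_inv_add_cross_eq (σ.injective ·)
    _ = _ := by
        rw [sum_congr rfl fun a _ => sum_add_distrib, sum_add_distrib,
          sum_sum_upper_lower_crossing_eq_zero, zero_add]

end Equiv.Perm

theorem natCast_eq_natCast_of_neg_one_pow_eq {a b : ℕ} (h : (-1 : ℤˣ) ^ a = (-1) ^ b) :
    (a : ZMod 2) = b := by
  rw [Int.units_pow_eq_pow_mod_two, Int.units_pow_eq_pow_mod_two (-1) b] at h
  rw [ZMod.natCast_eq_natCast_iff']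
  rcases Nat.mod_two_eq_zero_or_one a with ha | ha <;>
    rcases Nat.mod_two_eq_zero_or_one b with hb | hb <;> simp_all

section Fin

variable {n : ℕ} (σ : Perm (Fin n))

theorem sign_eq_neg_one_pow_invCt : Perm.sign σ = (-1) ^ invCt σ := by
  rw [Perm.sign_eq_prod_prod_Iio, invCt, ← prod_const, prod_filter, Fintype.prod_prod_type_right]
  refine prod_congr rfl fun j _ => ?_
  rw [← filter_univ_mem (Iio j), prod_filter]
  refine prod_congr rfl fun i _ => ?_
  have := σ.injective.eq_iff (a := i) (b := j)
  simp only [mem_Iio]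
  split_ifs <;> first | rfl | grind

theorem natCast_cycCt_eq : (cycCt σ : ZMod 2) = fixCt σ + #σ.support + invCt σ := by
  have hinv : (invCt σ : ZMod 2) = (#σ.support + σ.cycleType.card : ℕ) :=
    natCast_eq_natCast_of_neg_one_pow_eq <| by
      rw [← sign_eq_neg_one_pow_invCt, Perm.sign_of_cycleType, Perm.sum_cycleType]
  rw [cycCt, hinv]
  push_cast
  grind

theorem ucrossCt_eq_card_pairs :
    ucrossCt σ = #{p : Fin n × Fin n | p.1 < p.2 ∧ p.2 < σ p.1 ∧ σ p.1 < σ p.2} := by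
  refine card_nbij' (fun q => (q.1, q.2.1)) (fun p => (p.1, p.2, σ p.1, σ p.2))
    ?_ ?_ ?_ ?_ <;> intro <;> grind

theorem lcrossCt_eq_card_pairs :
    lcrossCt σ = #{p : Fin n × Fin n | p.1 < p.2 ∧ σ p.1 < σ p.2 ∧ σ p.2 < p.1} := by
  refine card_nbij' (fun q => (q.2.2.1, q.2.2.2)) (fun p => (σ p.1, σ p.2, p.1, p.2))
    ?_ ?_ ?_ ?_ <;> intro <;> grind

end Fin

theorem cyc_mod_two_eq_fix_add_cval_add_cross {n : ℕ} (σ : Equiv.Perm (Fin n)) :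
    cycCt σ % 2 = (fixCt σ + cvalCt σ + ucrossCt σ + lcrossCt σ) % 2 := by
  rw [← ZMod.natCast_eq_natCast_iff']
  push_cast
  rw [natCast_cycCt_eq, ucrossCt_eq_card_pairs, lcrossCt_eq_card_pairs]
  simp only [fixCt, cvalCt, invCt, Perm.support, natCast_card_filter, Fintype.sum_prod_type]
  have key := σ.inv_add_ne_add_crossings_eq_valley
  grind
end

section
/- For any permutation σ of [n], the number of inversions satisfies inv(σ) = cval(σ) + cdrise(σ) + cdfall(σ) + ucross(σ) + lcross(σ) + 2(unest(σ) + lnest(σ) + psnest(σ)). -/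
open Finset

/-!
Sort the inversions `i < j`, `σ j < σ i` by the arc `j ↦ σ j`. A rising arc gives an upper
nesting and a fixed point a pseudo-nesting. For a falling arc, comparing the positions before `j`
with the values below `σ j` shows that there are `j - σ j` such inversions, plus one for each lower
nesting in which `j ↦ σ j` is the inner arc.

Each cut between consecutive positions is crossed by as many rising arcs as falling ones, so the
total fall `∑ (j - σ j)` equals the number of pairs `i < p ≤ σ i`. Sorting these by the arc at `p`
gives the cycle double rises (`p = σ i < σ p`), the upper crossings, and a second copy of the upper
nestings and pseudo-nestings. The pairs with `σ p < p` are counted by the balance of the cut just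
before `p` once more: one for `i = p`, whose image `σ p` is a cycle valley or double fall, and one
for each lower crossing or nesting formed by `p ↦ σ p` and an arc `i ↦ σ i` with `p < i`.
-/

open Equiv

namespace Finset

variable {α β : Type*} [Fintype α] [Fintype β]

theorem card_filter_prod_eq_sum_fst (P : α → β → Prop) [∀ a b, Decidable (P a b)] :
    #{q : α × β | P q.1 q.2} = ∑ a, #{b | P a b} := by
  simp only [card_filter, Fintype.sum_prod_type]

theorem card_filter_prod_eq_sum_snd (P : α → β → Prop) [∀ a b, Decidable (P a b)] :
    #{q : α × β | P q.1 q.2} = ∑ b, #{a | P a b} := by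
  simp only [card_filter]
  rw [Fintype.sum_prod_type, sum_comm]

end Finset

theorem Fin.card_filter_lt {n : ℕ} (j : Fin n) : #{i | i < j} = j := by
  simp [filter_gt_eq_Iio]

namespace Equiv.Perm

variable {n : ℕ} (σ : Perm (Fin n))

theorem card_filter_apply_lt (j : Fin n) : #{i | σ i < j} = j := by
  rw [← Fin.card_filter_lt j]
  exact card_equiv σ (by simp)

theorem card_filter_lt_apply_gt_add (j : Fin n) :
    #{i | i < j ∧ σ j < σ i} + σ j = j + #{i | j < i ∧ σ i < σ j} := by
  have below_pos : #{i | i < j} = #{i | i < j ∧ σ i < σ j} + #{i | i < j ∧ σ j < σ i} := by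
    simp only [card_filter, ← sum_add_distrib]
    exact sum_congr rfl fun i _ => by grind [σ.injective.eq_iff]
  have below_val : #{i | σ i < σ j} = #{i | i < j ∧ σ i < σ j} + #{i | j < i ∧ σ i < σ j} := by
    simp only [card_filter, ← sum_add_distrib]
    exact sum_congr rfl fun i _ => by grind
  rw [Fin.card_filter_lt] at below_pos
  rw [card_filter_apply_lt] at below_val
  omega

theorem card_filter_lt_le_apply (m : Fin n) :
    #{i | i < m ∧ m ≤ σ i} = #{i | σ i < m ∧ m ≤ i} := by
  have below_pos : #{i | i < m} = #{i | i < m ∧ σ i < m} + #{i | i < m ∧ m ≤ σ i} := by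
    simp only [card_filter, ← sum_add_distrib]
    exact sum_congr rfl fun i _ => by grind
  have below_val : #{i | σ i < m} = #{i | i < m ∧ σ i < m} + #{i | σ i < m ∧ m ≤ i} := by
    simp only [card_filter, ← sum_add_distrib]
    exact sum_congr rfl fun i _ => by grind
  rw [Fin.card_filter_lt] at below_pos
  rw [card_filter_apply_lt] at below_val
  omega

theorem card_filter_lt_le_apply_of_apply_lt {p : Fin n} (hp : σ p < p) :
    #{i | i < p ∧ p ≤ σ i} = #{i | p < i ∧ σ i < p} + 1 := by
  rw [card_filter_lt_le_apply, ← card_singleton p, ← card_union_of_disjoint (by simp)]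
  congr 1
  ext i
  simp only [mem_filter, mem_univ, true_and, mem_union, mem_singleton]
  grind

end Equiv.Perm

section

variable {n : ℕ} (σ : Perm (Fin n))

theorem unestCt_eq_card :
    unestCt σ = #{q : Fin n × Fin n | q.1 < q.2 ∧ q.2 < σ q.2 ∧ σ q.2 < σ q.1} := by
  apply card_nbij' (fun p => (p.1, p.2.1)) (fun q => (q.1, q.2, σ q.2, σ q.1)) <;>
    simp [Set.MapsTo, Set.LeftInvOn, Set.RightInvOn] <;> grind

theorem ucrossCt_eq_card_s5 :
    ucrossCt σ = #{q : Fin n × Fin n | q.1 < q.2 ∧ q.2 < σ q.1 ∧ σ q.1 < σ q.2} := by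
  apply card_nbij' (fun p => (p.1, p.2.1)) (fun q => (q.1, q.2, σ q.1, σ q.2)) <;>
    simp [Set.MapsTo, Set.LeftInvOn, Set.RightInvOn] <;> grind

theorem lnestCt_eq_card :
    lnestCt σ = #{q : Fin n × Fin n | q.1 < q.2 ∧ σ q.2 < σ q.1 ∧ σ q.1 < q.1} := by
  apply card_nbij' (fun p => (p.2.2.1, p.2.2.2)) (fun q => (σ q.2, σ q.1, q.1, q.2)) <;>
    simp [Set.MapsTo, Set.LeftInvOn, Set.RightInvOn] <;> grind

theorem lcrossCt_eq_card :
    lcrossCt σ = #{q : Fin n × Fin n | q.1 < q.2 ∧ σ q.1 < σ q.2 ∧ σ q.2 < q.1} := by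
  apply card_nbij' (fun p => (p.2.2.1, p.2.2.2)) (fun q => (σ q.1, σ q.2, q.1, q.2)) <;>
    simp [Set.MapsTo, Set.LeftInvOn, Set.RightInvOn] <;> grind

theorem psnestCt_eq_card :
    psnestCt σ = #{q : Fin n × Fin n | q.1 < q.2 ∧ σ q.2 = q.2 ∧ q.2 < σ q.1} := by
  apply card_nbij' (fun p => (p.1, p.2.1)) (fun q => (q.1, q.2, σ q.1)) <;>
    simp [Set.MapsTo, Set.LeftInvOn, Set.RightInvOn] <;> grind

theorem cdriseCt_eq_card :
    cdriseCt σ = #{q : Fin n × Fin n | q.1 < q.2 ∧ q.2 = σ q.1 ∧ q.2 < σ q.2} := by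
  apply card_nbij' (fun i => (σ⁻¹ i, i)) Prod.snd <;>
    simp [Set.MapsTo, Set.LeftInvOn, Set.RightInvOn] <;> grind [Perm.inv_eq_iff_eq]

theorem card_filter_apply_lt_self : #{p | σ p < p} = cvalCt σ + cdfallCt σ := by
  rw [card_equiv σ (t := {i | i < σ⁻¹ i}) (by simp), cvalCt, cdfallCt]
  simp only [card_filter, ← sum_add_distrib]
  exact sum_congr rfl fun i _ => by grind [Perm.inv_eq_iff_eq]

theorem invCt_eq_unestCt_add_psnestCt_add : invCt σ = unestCt σ + psnestCt σ
    + #{q : Fin n × Fin n | q.1 < q.2 ∧ σ q.2 < σ q.1 ∧ σ q.2 < q.2} := by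
  rw [invCt, unestCt_eq_card, psnestCt_eq_card]
  simp only [card_filter, ← sum_add_distrib]
  exact sum_congr rfl fun q _ => by grind

theorem card_fall_inversions_eq :
    #{q : Fin n × Fin n | q.1 < q.2 ∧ σ q.2 < σ q.1 ∧ σ q.2 < q.2}
      = ∑ j : Fin n, ((j : ℕ) - σ j) + lnestCt σ := by
  rw [lnestCt_eq_card, card_filter_prod_eq_sum_snd (fun i j => i < j ∧ σ j < σ i ∧ σ j < j),
    card_filter_prod_eq_sum_fst (fun j l => j < l ∧ σ l < σ j ∧ σ j < j), ← sum_add_distrib]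
  refine sum_congr rfl fun j _ => ?_
  by_cases hj : σ j < j
  · simp only [hj, and_true]
    have fiber := σ.card_filter_lt_apply_gt_add j
    omega
  · simp only [hj, and_false, filter_false, card_empty, add_zero]
    omega

theorem sum_sub_apply_eq_card_lt_le_apply :
    ∑ j : Fin n, ((j : ℕ) - σ j) = #{q : Fin n × Fin n | q.1 < q.2 ∧ q.2 ≤ σ q.1} := by
  calc ∑ j : Fin n, ((j : ℕ) - σ j)
      = #{q : Fin n × Fin n | σ q.1 < q.2 ∧ q.2 ≤ q.1} := by
        rw [card_filter_prod_eq_sum_fst (fun j m => σ j < m ∧ m ≤ j)]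
        refine sum_congr rfl fun j _ => ?_
        rw [← Fin.card_Ioc]
        congr 1
        ext m
        simp
    _ = #{q : Fin n × Fin n | q.1 < q.2 ∧ q.2 ≤ σ q.1} := by
        rw [card_filter_prod_eq_sum_snd (fun i m => σ i < m ∧ m ≤ i),
          card_filter_prod_eq_sum_snd (fun i m => i < m ∧ m ≤ σ i)]
        exact sum_congr rfl fun m _ => (σ.card_filter_lt_le_apply m).symm

theorem card_lt_le_apply_eq : #{q : Fin n × Fin n | q.1 < q.2 ∧ q.2 ≤ σ q.1}
    = cdriseCt σ + ucrossCt σ + unestCt σ + psnestCt σ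
      + #{q : Fin n × Fin n | q.1 < q.2 ∧ q.2 ≤ σ q.1 ∧ σ q.2 < q.2} := by
  rw [cdriseCt_eq_card, ucrossCt_eq_card_s5, unestCt_eq_card, psnestCt_eq_card]
  simp only [card_filter, ← sum_add_distrib]
  exact sum_congr rfl fun q _ => by split_ifs <;> grind [σ.injective.eq_iff]

theorem card_lt_le_apply_fall_eq :
    #{q : Fin n × Fin n | q.1 < q.2 ∧ q.2 ≤ σ q.1 ∧ σ q.2 < q.2}
      = #{p | σ p < p} + #{q : Fin n × Fin n | q.1 < q.2 ∧ σ q.2 < q.1 ∧ σ q.1 < q.1} := by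
  rw [card_filter_prod_eq_sum_snd (fun i p => i < p ∧ p ≤ σ i ∧ σ p < p),
    card_filter_prod_eq_sum_fst (fun p i => p < i ∧ σ i < p ∧ σ p < p), card_filter,
    ← sum_add_distrib]
  refine sum_congr rfl fun p _ => ?_
  by_cases hp : σ p < p
  · simp only [hp, and_true, if_true, σ.card_filter_lt_le_apply_of_apply_lt hp]
    omega
  · simp [hp]

theorem card_lower_pairs_eq :
    #{q : Fin n × Fin n | q.1 < q.2 ∧ σ q.2 < q.1 ∧ σ q.1 < q.1} = lcrossCt σ + lnestCt σ := by
  rw [lcrossCt_eq_card, lnestCt_eq_card]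
  simp only [card_filter, ← sum_add_distrib]
  exact sum_congr rfl fun q _ => by grind [σ.injective.eq_iff]

end

theorem inv_formula {n : ℕ} (σ : Equiv.Perm (Fin n)) :
    invCt σ = cvalCt σ + cdriseCt σ + cdfallCt σ + ucrossCt σ + lcrossCt σ
      + 2 * (unestCt σ + lnestCt σ + psnestCt σ) := by
  have inversions := invCt_eq_unestCt_add_psnestCt_add σ
  have fall_inversions := card_fall_inversions_eq σ
  have displacement := sum_sub_apply_eq_card_lt_le_apply σ
  have covers := card_lt_le_apply_eq σ
  have fall_covers := card_lt_le_apply_fall_eq σ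
  have falls := card_filter_apply_lt_self σ
  have lower_pairs := card_lower_pairs_eq σ
  omega
end

section
/- For any permutation σ of [n]: (a) if i is a cycle valley or cycle double rise (i.e. σ(i)>i), then i is a record if and only if unest(i,σ)=0, where unest(i,σ) = #{(h,k,l) : h<i<k<l, k=σ(i), l=σ(h)}; and in that case i is an exclusive record (a record that is not an antirecord). -/
open Finset

/-- Pigeonhole: an antirecord `i` maps the `n - 1 - i` positions after it injectively into the
`n - 1 - σ i` values above `σ i`. -/
theorem IsAntirecord.apply_le {n : ℕ} {σ : Equiv.Perm (Fin n)} {i : Fin n}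
    (hanti : IsAntirecord σ i) : σ i ≤ i := by
  have hcard : #(Ioi i) ≤ #(Ioi (σ i)) :=
    card_le_card_of_injOn σ (fun j hj => by simpa using hanti j (by simpa using hj))
      σ.injective.injOn
  rw [Fin.card_Ioi, Fin.card_Ioi] at hcard
  exact Fin.le_def.mpr (by omega)

theorem isRecord_iff_forall_lt_imp_le {n : ℕ} {σ : Equiv.Perm (Fin n)} {i : Fin n} :
    IsRecord σ i ↔ ∀ j, j < i → σ j ≤ σ i :=
  forall₂_congr fun _ hj => (le_iff_lt_or_eq.trans <| or_iff_left <|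
    fun h => hj.ne (σ.injective h)).symm

/-- When `i < σ i`, the triples counted by `unestAt σ i` are exactly `(j, σ i, σ j)` with `j < i`
and `σ i < σ j`. -/
theorem unestAt_eq_zero_iff {n : ℕ} {σ : Equiv.Perm (Fin n)} {i : Fin n} (hi : i < σ i) :
    unestAt σ i = 0 ↔ ∀ j, j < i → σ j ≤ σ i := by
  simp only [unestAt, card_eq_zero, filter_eq_empty_iff, mem_univ, true_implies, not_and,
    Prod.forall]
  constructor
  · intro h0 j hj
    by_contra! hlt
    exact h0 j (σ i) (σ j) hj hi hlt rfl rfl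
  · rintro hle j _ _ hj - hlt rfl rfl
    exact (hle j hj).not_gt hlt

theorem record_iff_unest_eq_zero {n : ℕ} (σ : Equiv.Perm (Fin n)) (i : Fin n)
    (hi : i < σ i) :
    (IsRecord σ i ↔ unestAt σ i = 0) ∧
    (IsRecord σ i → IsRecord σ i ∧ ¬ IsAntirecord σ i) :=
  ⟨isRecord_iff_forall_lt_imp_le.trans (unestAt_eq_zero_iff hi).symm,
    fun hrec => ⟨hrec, fun hanti => hi.not_ge hanti.apply_le⟩⟩
end

section
/- For any permutation σ of [n]: if i is a cycle peak or cycle double fall (i.e. σ(i)<i), then i is an antirecord if and only if lnest(i,σ)=0, where lnest(i,σ) = #{(h,j,l) : h<j<i<l, h=σ(l), j=σ(i)}; and in that case i is an exclusive antirecord. -/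
open Finset

theorem antirecord_iff_lnest_eq_zero {n : ℕ} (σ : Equiv.Perm (Fin n)) (i : Fin n)
    (hi : σ i < i) :
    (IsAntirecord σ i ↔ lnestAt σ i = 0) ∧
    (IsAntirecord σ i → IsAntirecord σ i ∧ ¬ IsRecord σ i) := by
  constructor
  · constructor
    · intro hA
      rw [lnestAt, Finset.card_eq_zero, Finset.filter_eq_empty_iff]
      rintro p - ⟨h1, h2, h3, h4, h5⟩
      have := hA p.2.2 h3
      rw [← h5, ← h4] at this
      exact absurd (h1.trans this) (lt_irrefl _)
    · intro h0 j hij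
      by_contra hle
      push_neg at hle
      have hne : σ j ≠ σ i := fun h => (lt_irrefl i) (σ.injective h ▸ hij)
      have hlt : σ j < σ i := lt_of_le_of_ne hle hne
      have : (σ j, σ i, j) ∈ Finset.univ.filter fun p : Fin n × Fin n × Fin n =>
          p.1 < p.2.1 ∧ p.2.1 < i ∧ i < p.2.2 ∧ p.1 = σ p.2.2 ∧ p.2.1 = σ i := by
        exact Finset.mem_filter.mpr ⟨Finset.mem_univ _, hlt, hi, hij, rfl, rfl⟩
      have := Finset.card_pos.mpr ⟨_, this⟩
      rw [lnestAt] at h0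
      omega
  · intro hA
    refine ⟨hA, fun hR => ?_⟩
    have hmap : ∀ j ∈ Finset.Iic i, σ j ∈ Finset.Iic (σ i) := by
      intro j hj
      rw [Finset.mem_Iic] at *
      rcases lt_or_eq_of_le hj with h | h
      · exact (hR j h).le
      · exact h ▸ le_rfl
    have hcard := Finset.card_le_card_of_injOn σ hmap
      (Set.injOn_of_injective σ.injective)
    rw [Fin.card_Iic, Fin.card_Iic] at hcard
    have : (σ i : ℕ) < (i : ℕ) := hi
    omega
end

section
/- If σ is a cycle-alternating permutation of [2n], then for every cycle valley i, ucross(i,σ) + unest(i,σ) ≡ i−1 (mod 2), and for every cycle peak i, lcross(i,σ) + lnest(i,σ) ≡ i (mod 2). -/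
open Finset

/-!
For a cycle valley `j`, the `j` positions `i < j` split by whether `σ i < j` or `σ i > j`
(`σ i = j` would mean `σ⁻¹ j < j`), and those with `σ i > j` are exactly the crossings and
nestings counted by `ucrossAt σ j + unestAt σ j`. The positions `i < j` with `σ i < j` are
even in number: `σ` maps the cycle valleys among them bijectively onto the cycle peaks among them,
since the image of a cycle valley `i` is a cycle peak, with `σ (σ i) < σ i < j`. For a cycle
peak `k` one counts the `k` positions `i` with `σ i < k` instead, one of which is `k` itself.
-/

section

variable {m : ℕ} {σ : Equiv.Perm (Fin m)}

lemma ucrossAt_eq_card (j : Fin m) :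
    ucrossAt σ j = #{i | i < j ∧ j < σ i ∧ σ i < σ j} := by
  refine card_nbij' Prod.fst (fun i => (i, σ i, σ j)) ?_ ?_ ?_ ?_ <;>
    simp +contextual [Set.MapsTo, Set.LeftInvOn, Set.RightInvOn]
  grind

lemma unestAt_eq_card {j : Fin m} (hj : j < σ j) :
    unestAt σ j = #{i | i < j ∧ σ j < σ i} := by
  refine card_nbij' Prod.fst (fun i => (i, σ j, σ i)) ?_ ?_ ?_ ?_ <;>
    simp +contextual [Set.MapsTo, Set.LeftInvOn, Set.RightInvOn, hj]
  grind

lemma lcrossAt_eq_card (k : Fin m) :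
    lcrossAt σ k = #{l | k < l ∧ σ k < σ l ∧ σ l < k} := by
  refine card_nbij' (fun p => p.2.2) (fun l => (σ k, σ l, l)) ?_ ?_ ?_ ?_ <;>
    simp +contextual [Set.MapsTo, Set.LeftInvOn, Set.RightInvOn]
  grind

lemma lnestAt_eq_card {k : Fin m} (hk : σ k < k) :
    lnestAt σ k = #{l | k < l ∧ σ l < σ k} := by
  refine card_nbij' (fun p => p.2.2) (fun l => (σ l, σ k, l)) ?_ ?_ ?_ ?_ <;>
    simp +contextual [Set.MapsTo, Set.LeftInvOn, Set.RightInvOn, hk]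
  grind

lemma ucrossAt_add_unestAt {j : Fin m} (hj : j < σ j) :
    ucrossAt σ j + unestAt σ j = #{i | i < j ∧ j < σ i} := by
  rw [ucrossAt_eq_card, unestAt_eq_card hj,
    ← card_filter_add_card_filter_not (s := {i | i < j ∧ j < σ i}) (p := fun i => σ i < σ j),
    filter_filter, filter_filter]
  congr 2 <;> ext i <;> simp only [mem_filter, mem_univ, true_and] <;>
    grind [Equiv.apply_eq_iff_eq]

lemma lcrossAt_add_lnestAt {k : Fin m} (hk : σ k < k) :
    lcrossAt σ k + lnestAt σ k = #{l | k < l ∧ σ l < k} := by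
  rw [lcrossAt_eq_card, lnestAt_eq_card hk,
    ← card_filter_add_card_filter_not (s := {l | k < l ∧ σ l < k}) (p := fun l => σ k < σ l),
    filter_filter, filter_filter]
  congr 2 <;> ext l <;> simp only [mem_filter, mem_univ, true_and] <;>
    grind [Equiv.apply_eq_iff_eq]

lemma card_filter_apply_lt (j : Fin m) : #{i | σ i < j} = j := by
  rw [card_equiv σ (t := {i | i < j}) (by simp), filter_gt_eq_Iio, Fin.card_Iio]

lemma card_lt_and_apply_lt_add_card_lt_and_lt_apply {j : Fin m} (hj : j < σ⁻¹ j) :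
    #{i | i < j ∧ σ i < j} + #{i | i < j ∧ j < σ i} = j := by
  have hne {i : Fin m} (hi : i < j) : σ i ≠ j := by
    rintro rfl
    exact (hi.trans (by simpa using hj)).false
  rw [← Fin.card_Iio j, ← filter_gt_eq_Iio,
    ← card_filter_add_card_filter_not (s := {i | i < j}) (p := fun i => σ i < j),
    filter_filter, filter_filter]
  congr 2
  ext i
  simp only [mem_filter, mem_univ, true_and, not_lt]
  grind

lemma card_lt_and_apply_lt_add_card_gt_and_apply_lt {k : Fin m} (hk : σ k < k) :
    #{i | i < k ∧ σ i < k} + (#{l | k < l ∧ σ l < k} + 1) = k := by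
  have hge : ({l | ¬ l < k ∧ σ l < k} : Finset (Fin m)) =
      insert k ({l | k < l ∧ σ l < k} : Finset (Fin m)) := by
    ext l
    simp only [mem_filter, mem_univ, true_and, mem_insert]
    grind
  rw [← card_insert_of_notMem (s := {l | k < l ∧ σ l < k}) (a := k) (by simp), ← hge,
    ← card_filter_apply_lt (σ := σ) k,
    ← card_filter_add_card_filter_not (s := {i | σ i < k}) (p := fun i => i < k),
    filter_filter, filter_filter]
  simp only [and_comm]

lemma apply_apply_lt_of_lt_apply (hnodrise : ∀ i, ¬ (σ⁻¹ i < i ∧ i < σ i))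
    (hnofix : ∀ i, σ i ≠ i) {i : Fin m} (hi : i < σ i) : σ (σ i) < σ i :=
  (not_lt.1 fun h => hnodrise (σ i) ⟨by simpa using hi, h⟩).lt_of_ne (hnofix _)

lemma inv_apply_lt_of_apply_lt (hnodfall : ∀ i, ¬ (i < σ⁻¹ i ∧ σ i < i))
    (hnofix : ∀ i, σ i ≠ i) {i : Fin m} (hi : σ i < i) : σ⁻¹ i < i :=
  (not_lt.1 fun h => hnodfall i ⟨h, hi⟩).lt_of_ne fun h => hnofix i (σ.inv_eq_iff_eq.1 h).symm

theorem even_card_filter_lt_and_apply_lt (hnodrise : ∀ i, ¬ (σ⁻¹ i < i ∧ i < σ i))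
    (hnodfall : ∀ i, ¬ (i < σ⁻¹ i ∧ σ i < i)) (hnofix : ∀ i, σ i ≠ i) (j : Fin m) :
    Even #{i | i < j ∧ σ i < j} := by
  have hvalley_peak : #{i | (i < j ∧ σ i < j) ∧ i < σ i} =
      #{i | (i < j ∧ σ i < j) ∧ ¬ i < σ i} := by
    refine card_equiv σ fun i => ?_
    simp only [mem_filter, mem_univ, true_and, not_lt]
    constructor
    · rintro ⟨⟨-, hij⟩, hvalley⟩
      have hpeak := apply_apply_lt_of_lt_apply hnodrise hnofix hvalley
      exact ⟨⟨hij, hpeak.trans hij⟩, hpeak.le⟩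
    · rintro ⟨⟨hij, -⟩, hpeak⟩
      have hvalley : i < σ i := by
        simpa using inv_apply_lt_of_apply_lt hnodfall hnofix (hpeak.lt_of_ne (hnofix _))
      exact ⟨⟨hvalley.trans hij, hij⟩, hvalley⟩
  rw [← card_filter_add_card_filter_not (p := fun i => i < σ i), filter_filter, filter_filter,
    hvalley_peak]
  exact .add_self _

end

theorem cycleAlternating_cross_nest_parity {n : ℕ} (σ : Equiv.Perm (Fin (2 * n)))
    (hnodrise : ∀ i, ¬ (σ⁻¹ i < i ∧ i < σ i))
    (hnodfall : ∀ i, ¬ (i < σ⁻¹ i ∧ σ i < i))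
    (hnofix : ∀ i, σ i ≠ i) :
    ∀ i : Fin (2 * n),
      ((i < σ⁻¹ i ∧ i < σ i) →
        (ucrossAt σ i + unestAt σ i) % 2 = (i : ℕ) % 2) ∧
      ((σ⁻¹ i < i ∧ σ i < i) →
        (lcrossAt σ i + lnestAt σ i) % 2 = ((i : ℕ) + 1) % 2) := by
  intro i
  obtain ⟨r, hr⟩ := even_card_filter_lt_and_apply_lt hnodrise hnodfall hnofix i
  refine ⟨fun ⟨hi_inv, hi⟩ => ?_, fun ⟨_, hi⟩ => ?_⟩
  · have hcount := card_lt_and_apply_lt_add_card_lt_and_lt_apply hi_inv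
    rw [ucrossAt_add_unestAt hi]
    omega
  · have hcount := card_lt_and_apply_lt_add_card_gt_and_apply_lt hi
    rw [lcrossAt_add_lnestAt hi]
    omega
end
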